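/- For any point set X = (x^{(1)},...,x^{(N)}) on the unit sphere S^{d-1} in R^d (d ≥ 2), the spherical cap discrepancy satisfies Δ(X) ≥ min{d,N}/(2N) > 0. -/
import Mathlib

open Real Set
open scoped RealInnerProductSpace

noncomputable section

/-- Normalizing constant `C_d`. -/
def Cd (d : ℕ) : ℝ := (∫ τ in (0:ℝ)..π, Real.sin τ ^ (d - 2))⁻¹

/-- The cap measure `μ^{cap}(t)` on `[-1,1]`. -/
def capM (d : ℕ) (t : ℝ) : ℝ :=
  if 0 ≤ t then Cd d * ∫ τ in (0:ℝ)..Real.arccos t, Real.sin τ ^ (d - 2)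
  else 1 - Cd d * ∫ τ in (0:ℝ)..Real.arccos (-t), Real.sin τ ^ (d - 2)

/-- The empirical measure `μ^{emp}(X,w,t)` of the closed half space `{x | ⟪w,x⟫ ≥ t}`. -/
def empM {d N : ℕ} (X : Fin N → EuclideanSpace ℝ (Fin d)) (w : EuclideanSpace ℝ (Fin d))
    (t : ℝ) : ℝ :=
  (Nat.card {i : Fin N // t ≤ ⟪w, X i⟫} : ℝ) / N

/-- The spherical cap discrepancy `Δ(X)`. -/
def disc {d N : ℕ} (X : Fin N → EuclideanSpace ℝ (Fin d)) : ℝ :=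
  sSup {r : ℝ | ∃ w : EuclideanSpace ℝ (Fin d), ‖w‖ = 1 ∧
    ∃ t ∈ Icc (-1:ℝ) 1, r = |empM X w t - capM d t|}

/- ### Auxiliary lemmas -/

lemma sinpow_intble (d : ℕ) (a b : ℝ) :
    IntervalIntegrable (fun τ => Real.sin τ ^ (d - 2)) MeasureTheory.volume a b :=
  (Real.continuous_sin.pow _).intervalIntegrable a b

lemma I_pos (d : ℕ) : 0 < ∫ τ in (0:ℝ)..π, Real.sin τ ^ (d - 2) := by
  apply intervalIntegral.intervalIntegral_pos_of_pos_on (sinpow_intble d 0 π)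
  · intro x hx
    exact pow_pos (Real.sin_pos_of_pos_of_lt_pi hx.1 hx.2) _
  · exact Real.pi_pos

lemma Cd_pos (d : ℕ) : 0 < Cd d := inv_pos.2 (I_pos d)

lemma F_nonneg (d : ℕ) (t : ℝ) :
    0 ≤ ∫ τ in (0:ℝ)..Real.arccos t, Real.sin τ ^ (d - 2) := by
  apply intervalIntegral.integral_nonneg (Real.arccos_nonneg t)
  intro x hx
  exact pow_nonneg
    (Real.sin_nonneg_of_nonneg_of_le_pi hx.1 (hx.2.trans (Real.arccos_le_pi t))) _

lemma F_le (d : ℕ) (t : ℝ) :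
    (∫ τ in (0:ℝ)..Real.arccos t, Real.sin τ ^ (d - 2))
      ≤ ∫ τ in (0:ℝ)..π, Real.sin τ ^ (d - 2) := by
  apply intervalIntegral.integral_mono_interval le_rfl (Real.arccos_nonneg t)
    (Real.arccos_le_pi t) ?_ (sinpow_intble d 0 π)
  refine (MeasureTheory.ae_restrict_iff' measurableSet_Ioc).2 (Filter.Eventually.of_forall ?_)
  intro x hx
  exact pow_nonneg (Real.sin_nonneg_of_nonneg_of_le_pi hx.1.le hx.2) _

lemma capM_mem (d : ℕ) (t : ℝ) : capM d t ∈ Icc (0:ℝ) 1 := by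
  have hC := Cd_pos d
  have key : ∀ s : ℝ, Cd d * (∫ τ in (0:ℝ)..Real.arccos s, Real.sin τ ^ (d - 2)) ∈ Icc (0:ℝ) 1 := by
    intro s
    constructor
    · exact mul_nonneg hC.le (F_nonneg d s)
    · have : Cd d * (∫ τ in (0:ℝ)..Real.arccos s, Real.sin τ ^ (d - 2))
          ≤ Cd d * ∫ τ in (0:ℝ)..π, Real.sin τ ^ (d - 2) :=
        mul_le_mul_of_nonneg_left (F_le d s) hC.le
      rwa [Cd, inv_mul_cancel₀ (I_pos d).ne'] at this
  unfold capM
  split_ifs with h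
  · exact key t
  · obtain ⟨h1, h2⟩ := key (-t)
    constructor <;> [linarith; linarith]

lemma capM_one (d : ℕ) : capM d 1 = 0 := by
  simp [capM, Real.arccos_one]

lemma capM_cont_nonneg (d : ℕ) :
    Continuous (fun s : ℝ => Cd d * ∫ τ in (0:ℝ)..Real.arccos s, Real.sin τ ^ (d - 2)) :=
  continuous_const.mul
    ((intervalIntegral.continuous_primitive (fun a b => sinpow_intble d a b) 0).comp
      Real.continuous_arccos)

lemma capM_cont_neg (d : ℕ) :
    Continuous (fun s : ℝ => 1 - Cd d * ∫ τ in (0:ℝ)..Real.arccos (-s), Real.sin τ ^ (d - 2)) :=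
  continuous_const.sub ((capM_cont_nonneg d).comp continuous_neg)

lemma empM_mem {d N : ℕ} (hN : 0 < N) (X : Fin N → EuclideanSpace ℝ (Fin d))
    (w : EuclideanSpace ℝ (Fin d)) (t : ℝ) : empM X w t ∈ Icc (0:ℝ) 1 := by
  have hNpos : (0:ℝ) < N := by exact_mod_cast hN
  unfold empM
  constructor
  · exact div_nonneg (Nat.cast_nonneg _) hNpos.le
  · rw [div_le_one hNpos]
    have : Nat.card {i : Fin N // t ≤ ⟪w, X i⟫} ≤ N := by
      classical
      rw [Nat.card_eq_fintype_card]
      simpa using Fintype.card_subtype_le (fun i : Fin N => t ≤ ⟪w, X i⟫)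
    exact_mod_cast this

lemma disc_bddAbove {d N : ℕ} (hN : 0 < N) (X : Fin N → EuclideanSpace ℝ (Fin d)) :
    BddAbove {r : ℝ | ∃ w : EuclideanSpace ℝ (Fin d), ‖w‖ = 1 ∧
      ∃ t ∈ Icc (-1:ℝ) 1, r = |empM X w t - capM d t|} := by
  refine ⟨1, ?_⟩
  rintro r ⟨w, hw, t, ht, rfl⟩
  have h1 := empM_mem hN X w t
  have h2 := capM_mem d t
  rw [abs_sub_le_iff]
  constructor <;> [linarith [h1.2, h2.1]; linarith [h1.1, h2.2]]

set_option maxHeartbeats 2000000 in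
/-- `Δ(X) ≥ min{d,N}/(2N) > 0` for every point set on the sphere. -/
theorem lower_bound_disc {d N : ℕ} (hd : 2 ≤ d) (hN : 0 < N)
    (X : Fin N → EuclideanSpace ℝ (Fin d)) (hX : ∀ i, ‖X i‖ = 1) :
    (min d N : ℝ) / (2 * N) ≤ disc X ∧ 0 < (min d N : ℝ) / (2 * N) := by
  classical
  set m : ℕ := min d N with hmdef
  have hm1 : 1 ≤ m := le_min (by omega) hN
  have hmN : m ≤ N := min_le_right _ _
  have hmd : m ≤ d := min_le_left _ _
  have hNpos : (0:ℝ) < N := by exact_mod_cast hN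
  have hmR : (1:ℝ) ≤ m := by exact_mod_cast hm1
  have hcast : (min (d:ℝ) (N:ℝ)) = (m:ℝ) := by rw [← Nat.cast_min]
  rw [hcast]
  -- positivity part
  have hpos : 0 < (m : ℝ) / (2 * N) := by
    apply div_pos (lt_of_lt_of_le one_pos hmR) (by positivity)
  refine ⟨?_, hpos⟩
  -- the point set restricted to the first m indices
  set x : Fin m → EuclideanSpace ℝ (Fin d) := fun i => X (Fin.castLE hmN i) with hxdef
  set i0 : Fin m := ⟨0, hm1⟩ with hi0
  set v : Fin m → EuclideanSpace ℝ (Fin d) := fun i => x i - x i0 with hvdef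
  set T : Finset (Fin m) := Finset.univ.erase i0 with hT
  set U : Submodule ℝ (EuclideanSpace ℝ (Fin d)) :=
    Submodule.span ℝ ((T.image v : Finset _) : Set _) with hU
  -- existence of a unit vector w and t with all chosen points on the hyperplane ⟪w,·⟫ = t
  obtain ⟨w, hw, t, ht, hwt⟩ : ∃ w : EuclideanSpace ℝ (Fin d), ‖w‖ = 1 ∧
      ∃ t ∈ Icc (-1:ℝ) 1, ∀ i : Fin m, ⟪w, x i⟫ = t := by
    have hrank : Module.finrank ℝ U ≤ m - 1 := by
      calc Module.finrank ℝ U ≤ (T.image v).card := finrank_span_finset_le_card _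
        _ ≤ T.card := Finset.card_image_le
        _ = m - 1 := by rw [hT, Finset.card_erase_of_mem (Finset.mem_univ _), Finset.card_univ,
            Fintype.card_fin]
    have hUne : U ≠ ⊤ := by
      intro h
      have hE : Module.finrank ℝ (EuclideanSpace ℝ (Fin d)) = d := by
        simp [finrank_euclideanSpace]
      rw [h, finrank_top, hE] at hrank
      omega
    have hbot : Uᗮ ≠ ⊥ := by
      intro h
      exact hUne (Submodule.orthogonal_eq_bot_iff.1 h)
    obtain ⟨w0, hw0U, hw0⟩ := Submodule.exists_mem_ne_zero_of_ne_bot hbot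
    have hnw0 : ‖w0‖ ≠ 0 := norm_ne_zero_iff.2 hw0
    set w : EuclideanSpace ℝ (Fin d) := ‖w0‖⁻¹ • w0 with hwdef
    have hwnorm : ‖w‖ = 1 := by
      rw [hwdef, norm_smul, norm_inv, norm_norm, inv_mul_cancel₀ hnw0]
    have hwU : w ∈ Uᗮ := Uᗮ.smul_mem _ hw0U
    have hkey : ∀ i : Fin m, ⟪w, x i⟫ = ⟪w, x i0⟫ := by
      intro i
      have hv : v i ∈ U := by
        by_cases h : i = i0
        · rw [h]; simp [hvdef]
        · apply Submodule.subset_span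
          exact Finset.mem_coe.2 (Finset.mem_image.2 ⟨i, Finset.mem_erase.2 ⟨h, Finset.mem_univ _⟩, rfl⟩)
      have := (Submodule.mem_orthogonal _ _).1 hwU (v i) hv
      have h2 : ⟪w, v i⟫ = 0 := by rwa [real_inner_comm] at this
      rw [hvdef] at h2
      simp only [inner_sub_right] at h2
      linarith
    refine ⟨w, hwnorm, ⟪w, x i0⟫, ?_, hkey⟩
    have := abs_real_inner_le_norm w (x i0)
    rw [hwnorm, hxdef] at this
    simp only [hX, one_mul] at this
    exact abs_le.1 this
  -- counting
  set A : ℝ → Finset (Fin N) := fun s => Finset.univ.filter (fun i => s ≤ ⟪w, X i⟫) with hA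
  have hcard : ∀ s : ℝ, (Nat.card {i : Fin N // s ≤ ⟪w, X i⟫} : ℝ) = (A s).card := by
    intro s
    rw [Nat.card_eq_fintype_card, Fintype.card_subtype]
  set C : Finset (Fin N) := Finset.univ.image (Fin.castLE hmN) with hC
  have hCcard : C.card = m := by
    rw [hC, Finset.card_image_of_injective _ (Fin.castLE_injective hmN), Finset.card_univ,
      Fintype.card_fin]
  have hCval : ∀ j ∈ C, ⟪w, X j⟫ = t := by
    intro j hj
    obtain ⟨i, _, rfl⟩ := Finset.mem_image.1 hj
    exact hwt i
  have hcount : ∀ s : ℝ, t < s → ((A s).card : ℝ) + m ≤ (A t).card := by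
    intro s hs
    have hdisj : Disjoint (A s) C := by
      rw [Finset.disjoint_left]
      intro j hj hjC
      rw [hA, Finset.mem_filter] at hj
      rw [hCval j hjC] at hj
      exact absurd hj.2 (not_le.2 hs)
    have hsub : A s ∪ C ⊆ A t := by
      intro j hj
      rw [hA, Finset.mem_filter]
      refine ⟨Finset.mem_univ _, ?_⟩
      rcases Finset.mem_union.1 hj with h | h
      · rw [hA, Finset.mem_filter] at h
        linarith [h.2]
      · rw [hCval j h]
    have := Finset.card_le_card hsub
    rw [Finset.card_union_of_disjoint hdisj, hCcard] at this
    exact_mod_cast this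
  have hemp : ∀ s : ℝ, t < s → (m:ℝ)/N ≤ empM X w t - empM X w s := by
    intro s hs
    unfold empM
    rw [hcard, hcard, div_sub_div_same, div_le_div_iff₀ hNpos hNpos]
    have := hcount s hs
    nlinarith [hNpos]
  -- membership in the sup set
  have hbdd := disc_bddAbove hN X
  have hmem : ∀ s ∈ Icc (-1:ℝ) 1, |empM X w s - capM d s| ≤ disc X := by
    intro s hs
    exact le_csSup hbdd ⟨w, hw, s, hs, rfl⟩
  -- goal reduction
  have hgoal : (m:ℝ) / (2 * N) ≤ disc X := by
    by_cases h1 : t = 1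
    · -- all chosen points at the north pole of w
      have : (m:ℝ)/N ≤ empM X w 1 := by
        unfold empM
        rw [hcard, div_le_div_iff₀ hNpos hNpos]
        have hsub : C ⊆ A 1 := by
          intro j hj
          rw [hA, Finset.mem_filter]
          exact ⟨Finset.mem_univ _, by rw [hCval j hj, h1]⟩
        have := Finset.card_le_card hsub
        rw [hCcard] at this
        have : (m:ℝ) ≤ (A (1:ℝ)).card := by exact_mod_cast this
        nlinarith
      have h2 := hmem 1 ⟨by norm_num, le_rfl⟩
      rw [capM_one, sub_zero] at h2
      have h3 : empM X w 1 ≤ |empM X w 1| := le_abs_self _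
      have : (m:ℝ)/(2*N) ≤ (m:ℝ)/N := by
        apply div_le_div_of_nonneg_left (by positivity) hNpos
        linarith
      linarith
    · -- t < 1 : approximate from the right
      have htlt : t < 1 := lt_of_le_of_ne ht.2 h1
      have key : ∀ ε : ℝ, 0 < ε → (m:ℝ)/N ≤ 2 * disc X + ε := by
        intro ε hε
        -- find t' ∈ (t, 1] with |capM d t' - capM d t| < ε, same branch
        obtain ⟨t', ht't, ht'1, hclose⟩ :
            ∃ t', t < t' ∧ t' ≤ 1 ∧ |capM d t' - capM d t| < ε := by
          by_cases ht0 : 0 ≤ t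
          · obtain ⟨δ, hδ, hδ2⟩ := Metric.continuousAt_iff.1 ((capM_cont_nonneg d).continuousAt (x := t)) ε hε
            refine ⟨min (t + δ/2) ((t+1)/2), lt_min (by linarith) (by linarith), (min_le_right _ _).trans (by linarith), ?_⟩
            set t' := min (t + δ/2) ((t+1)/2) with ht'
            have h1' : t < t' := lt_min (by linarith) (by linarith)
            have h2' : t' ≤ t + δ/2 := min_le_left _ _
            have hdist : dist t' t < δ := by
              rw [Real.dist_eq, abs_of_pos (by linarith)]
              linarith
            have := hδ2 hdist
            rw [Real.dist_eq] at this
            have ht'0 : 0 ≤ t' := le_trans ht0 h1'.le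
            simp only [capM]
            rw [if_pos ht'0, if_pos ht0]
            exact this
          · push_neg at ht0
            obtain ⟨δ, hδ, hδ2⟩ := Metric.continuousAt_iff.1 ((capM_cont_neg d).continuousAt (x := t)) ε hε
            refine ⟨min (t + δ/2) (t/2), lt_min (by linarith) (by linarith), ?_, ?_⟩
            · have : t/2 < 0 := by linarith
              exact ((min_le_right _ _).trans this.le).trans (by norm_num)
            set t' := min (t + δ/2) (t/2) with ht'
            have h1' : t < t' := lt_min (by linarith) (by linarith)
            have h2' : t' ≤ t + δ/2 := min_le_left _ _
            have ht'0 : t' < 0 := lt_of_le_of_lt (min_le_right _ _) (by linarith)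
            have hdist : dist t' t < δ := by
              rw [Real.dist_eq, abs_of_pos (by linarith)]
              linarith
            have := hδ2 hdist
            rw [Real.dist_eq] at this
            simp only [capM]
            rw [if_neg (not_le.2 ht'0), if_neg (not_le.2 ht0)]
            exact this
        have hm1' := hmem t ht
        have hm2' := hmem t' ⟨le_trans ht.1 ht't.le, ht'1⟩
        have hstep := hemp t' ht't
        have habs1 : empM X w t - capM d t ≤ |empM X w t - capM d t| := le_abs_self _
        have habs2 : -(empM X w t' - capM d t') ≤ |empM X w t' - capM d t'| := neg_le_abs _
        have habs3 : capM d t - capM d t' ≤ |capM d t' - capM d t| := by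
          rw [abs_sub_comm]; exact le_abs_self _
        have : empM X w t - empM X w t' =
            (empM X w t - capM d t) + (-(empM X w t' - capM d t')) + (capM d t - capM d t') := by
          ring
        linarith
      have h2 : (m:ℝ)/N ≤ 2 * disc X := le_of_forall_pos_le_add key
      have : (m:ℝ)/(2*N) = ((m:ℝ)/N)/2 := by ring
      linarith
  exact hgoal
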